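/- In the critical case, if X solves XCX - XD - AX + B = 0 with Xv_1 = v_2 and u_1ᵀ + u_2ᵀX = 0, then (D̄ - C̄X)v_1 = η v_1; i.e., v_1 = Γ^{-1}q is an eigenvector of D̄ - C̄X with eigenvalue η. In particular (D - CX)v_1 = 0 and (r_1ᵀ + r_2ᵀX)v_1 = 1. -/

import Mathlib

/-!
Expanding the product turns `D̄ - C̄X` into `D - CX` plus the rank-one terms
`η v₁ (r₁ᵀ + r₂ᵀX)` and `ξ s₁ (u₁ᵀ + u₂ᵀX)`. The last vanishes by hypothesis, so everything
reduces to `(D - CX)v₁ = 0` and `(r₁ᵀ + r₂ᵀX)v₁ = 1`. With `D = Γ - qeᵀ`, `C = qqᵀ`, `Γv₁ = q`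
and `Xv₁ = v₂`, both follow from `eᵀv₁ + qᵀv₂ = 1`, and in the critical case each of these two
dot products equals `∑ cᵢ / 2 = 1/2`.
-/

open Matrix Finset

section RankOneShift

variable {ι R : Type*} [Fintype ι] [CommRing R]

theorem shift_sub_mul_eq (D C X : Matrix ι ι R) (η ξ : R) (v s r₁ r₂ u₁ u₂ : ι → R) :
    D + η • vecMulVec v r₁ + ξ • vecMulVec s u₁ - (C - η • vecMulVec v r₂ - ξ • vecMulVec s u₂) * X
      = D - C * X + η • vecMulVec v (r₁ + r₂ ᵥ* X) + ξ • vecMulVec s (u₁ + u₂ ᵥ* X) := by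
  rw [sub_mul, sub_mul, smul_mul_assoc, smul_mul_assoc, vecMulVec_mul, vecMulVec_mul,
    vecMulVec_add, vecMulVec_add, smul_add, smul_add]
  abel

theorem shift_sub_mul_mulVec_eq_smul {D C X : Matrix ι ι R} {η : R} (ξ : R)
    {v r₁ r₂ : ι → R} (s : ι → R) {u₁ u₂ : ι → R}
    (hv : (D - C * X) *ᵥ v = 0) (hr : (r₁ + r₂ ᵥ* X) ⬝ᵥ v = 1) (hu : u₁ + u₂ ᵥ* X = 0) :
    (D + η • vecMulVec v r₁ + ξ • vecMulVec s u₁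
      - (C - η • vecMulVec v r₂ - ξ • vecMulVec s u₂) * X) *ᵥ v = η • v := by
  rw [shift_sub_mul_eq, add_mulVec, add_mulVec, smul_mulVec, smul_mulVec, vecMulVec_mulVec,
    vecMulVec_mulVec, hv, hr, hu]
  simp

theorem sub_vecMulVec_sub_vecMulVec_mul_mulVec (Γ X : Matrix ι ι R) (q e v : ι → R) :
    (Γ - vecMulVec q e - vecMulVec q q * X) *ᵥ v
      = Γ *ᵥ v - (e ⬝ᵥ v + q ⬝ᵥ (X *ᵥ v)) • q := by
  rw [vecMulVec_mul, sub_mulVec, sub_mulVec, vecMulVec_mulVec, vecMulVec_mulVec,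
    ← dotProduct_mulVec, add_smul]
  simp only [op_smul_eq_smul]
  abel

end RankOneShift

theorem diagonal_one_div_mul_diagonal {ι K : Type*} [Fintype ι] [DecidableEq ι] [Field K]
    {ω : ι → K} (hω : ∀ i, ω i ≠ 0) : diagonal (fun i => 1 / ω i) * diagonal ω = 1 := by
  rw [diagonal_mul_diagonal, ← diagonal_one]
  congr 1
  funext i
  exact one_div_mul_cancel (hω i)

theorem inv_diagonal_one_div {ι K : Type*} [Fintype ι] [DecidableEq ι] [Field K] {ω : ι → K}
    (hω : ∀ i, ω i ≠ 0) : (diagonal fun i => 1 / ω i)⁻¹ = diagonal ω :=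
  inv_eq_right_inv (diagonal_one_div_mul_diagonal hω)

theorem dotProduct_div_two_mul {ι K : Type*} [Fintype ι] [Field K] [CharZero K] {ω c : ι → K}
    (hω : ∀ i, ω i ≠ 0) (hsum : ∑ i, c i = 1) : (fun i => c i / (2 * ω i)) ⬝ᵥ ω = 1 / 2 := by
  have hterm : ∀ i, c i / (2 * ω i) * ω i = c i / 2 := fun i => by field_simp [hω i]
  simp only [dotProduct, hterm, ← Finset.sum_div, hsum]

theorem v1_eigenvector_of_shifted_general {n : ℕ} (ω c : Fin n → ℝ)
    (hω : ∀ i, 0 < ω i)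
    (hsum : ∑ i, c i = 1)
    (q e : Fin n → ℝ) (hq : q = fun i => c i / (2 * ω i)) (he : e = fun _ => 1)
    (Γ Δ C D : Matrix (Fin n) (Fin n) ℝ)
    (hΓ : Γ = diagonal fun i => 1 / ω i) (hΔ : Δ = diagonal fun i => 1 / ω i)
    (hC : C = vecMulVec q q) (hD : D = Γ - vecMulVec q e)
    (v₁ v₂ u₁ u₂ r₁ r₂ s₁ : Fin n → ℝ)
    (hv₁ : v₁ = Γ⁻¹.mulVec q) (hv₂ : v₂ = Δ⁻¹.mulVec e)
    (hr₁ : r₁ = e) (hr₂ : r₂ = q)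
    (η ξ : ℝ)
    (Db Cb : Matrix (Fin n) (Fin n) ℝ)
    (hDb : Db = D + η • vecMulVec v₁ r₁ + ξ • vecMulVec s₁ u₁)
    (hCb : Cb = C - η • vecMulVec v₁ r₂ - ξ • vecMulVec s₁ u₂)
    (X : Matrix (Fin n) (Fin n) ℝ)
    (hXv : X.mulVec v₁ = v₂) (hXu : u₁ + X.vecMul u₂ = 0) :
    (Db - Cb * X).mulVec v₁ = η • v₁ ∧
      (D - C * X).mulVec v₁ = 0 ∧
      (r₁ + X.vecMul r₂) ⬝ᵥ v₁ = 1 := by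
  have hω₀ : ∀ i, ω i ≠ 0 := fun i => (hω i).ne'
  have hΓinv : Γ⁻¹ = diagonal ω := hΓ ▸ inv_diagonal_one_div hω₀
  have hΓv₁ : Γ *ᵥ v₁ = q := by
    rw [hv₁, mulVec_mulVec, hΓinv, hΓ, diagonal_one_div_mul_diagonal hω₀, one_mulVec]
  have hqω : q ⬝ᵥ ω = 1 / 2 := hq ▸ dotProduct_div_two_mul hω₀ hsum
  have hbalance : e ⬝ᵥ v₁ + q ⬝ᵥ (X *ᵥ v₁) = 1 := by
    rw [hXv, hv₂, hv₁, hΔ, ← hΓ, hΓinv, he]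
    simp only [dotProduct, mulVec_diagonal, one_mul, mul_comm (ω _)]
    change q ⬝ᵥ ω + q ⬝ᵥ ω = 1
    rw [hqω]
    norm_num
  have hDCX : (D - C * X) *ᵥ v₁ = 0 := by
    rw [hD, hC, sub_vecMulVec_sub_vecMulVec_mul_mulVec, hΓv₁, hbalance, one_smul, sub_self]
  have hr : (r₁ + r₂ ᵥ* X) ⬝ᵥ v₁ = 1 := by
    rw [hr₁, hr₂, add_dotProduct, ← dotProduct_mulVec, hbalance]
  exact ⟨hDb ▸ hCb ▸ shift_sub_mul_mulVec_eq_smul ξ s₁ hDCX hr hXu, hDCX, hr⟩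

/-- Part of Theorem 3.8: if `X` solves the NARE with `X v₁ = v₂` and
`u₁ᵀ + u₂ᵀ X = 0`, then `(D̄ - C̄ X) v₁ = η v₁`; in particular
`(D - C X) v₁ = 0` and `(r₁ᵀ + r₂ᵀ X) v₁ = 1`. -/
theorem v1_eigenvector_of_shifted {n : ℕ} (ω c : Fin n → ℝ)
    (hω : ∀ i, 0 < ω i) (hω1 : ∀ i, ω i < 1) (hmono : StrictAnti ω)
    (hc : ∀ i, 0 < c i) (hsum : ∑ i, c i = 1)
    (q e : Fin n → ℝ) (hq : q = fun i => c i / (2 * ω i)) (he : e = fun _ => 1)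
    (Γ Δ A B C D : Matrix (Fin n) (Fin n) ℝ)
    (hΓ : Γ = diagonal fun i => 1 / ω i) (hΔ : Δ = diagonal fun i => 1 / ω i)
    (hA : A = Δ - vecMulVec e q) (hB : B = vecMulVec e e)
    (hC : C = vecMulVec q q) (hD : D = Γ - vecMulVec q e)
    (v₁ v₂ u₁ u₂ r₁ r₂ s₁ : Fin n → ℝ)
    (hv₁ : v₁ = Γ⁻¹.mulVec q) (hv₂ : v₂ = Δ⁻¹.mulVec e)
    (hu₁ : u₁ = Γ⁻¹.mulVec e) (hu₂ : u₂ = -(Δ⁻¹.mulVec q))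
    (hr₁ : r₁ = e) (hr₂ : r₂ = q) (hs₁ : s₁ = q)
    (η ξ : ℝ)
    (Db Cb : Matrix (Fin n) (Fin n) ℝ)
    (hDb : Db = D + η • vecMulVec v₁ r₁ + ξ • vecMulVec s₁ u₁)
    (hCb : Cb = C - η • vecMulVec v₁ r₂ - ξ • vecMulVec s₁ u₂)
    (X : Matrix (Fin n) (Fin n) ℝ) (hX0 : ∀ i j, 0 ≤ X i j)
    (hsol : X * C * X - X * D - A * X + B = 0)
    (hXv : X.mulVec v₁ = v₂) (hXu : u₁ + X.vecMul u₂ = 0) :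
    (Db - Cb * X).mulVec v₁ = η • v₁ ∧
      (D - C * X).mulVec v₁ = 0 ∧
      (r₁ + X.vecMul r₂) ⬝ᵥ v₁ = 1 :=
  v1_eigenvector_of_shifted_general ω c hω hsum q e hq he Γ Δ C D hΓ hΔ hC hD v₁ v₂ u₁ u₂ r₁ r₂ s₁
    hv₁ hv₂ hr₁ hr₂ η ξ Db Cb hDb hCb X hXv hXu
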